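/- arXiv:2508.17177 — 3 statements merged into one kernel-verified Lean document; each statement's English description precedes it below -/
import Mathlib

section
/- For every welfare-maximizing RPR Z, every set F ⊆ F_S of positional scoring rules, every profile σ, and every k ∈ ℤ_+, Z(F, Shuffle_{[2,m]}^k(σ)) = F. Consequently, if m ≥ 3 then every welfare-maximizing RPR fails plurality-shuffling consistency. -/
open scoped Classical

noncomputable section

/-- A strict ranking of the alternatives `A` among `m` positions: each alternative is
assigned its (0-indexed) position. -/
abbrev Ranking (A : Type*) (m : ℕ) := A ≃ Fin m

/-- A weak ranking: a complete and transitive binary relation (ties allowed).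
`ge a b` means `a` is ranked weakly above `b`. -/
structure WeakRanking (A : Type*) where
  ge : A → A → Prop
  total : ∀ a b, ge a b ∨ ge b a
  trans : ∀ a b c, ge a b → ge b c → ge a c

namespace WeakRanking

variable {A : Type*}

/-- `a` is ranked strictly above `b`. -/
def strict (r : WeakRanking A) (a b : A) : Prop := r.ge a b ∧ ¬ r.ge b a

/-- `a` and `b` are tied. -/
def tied (r : WeakRanking A) (a b : A) : Prop := r.ge a b ∧ r.ge b a

/-- The reversed weak ranking. -/
def rev (r : WeakRanking A) : WeakRanking A where
  ge a b := r.ge b a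
  total a b := r.total b a
  trans _ _ _ h1 h2 := r.trans _ _ _ h2 h1

/-- The all-tied weak ranking. -/
def allTied (A : Type*) : WeakRanking A :=
  ⟨fun _ _ => True, fun _ _ => Or.inl trivial, fun _ _ _ _ _ => trivial⟩

end WeakRanking

variable {A : Type*} {m : ℕ}

/-- The weak ranking induced by a strict ranking (smaller position = ranked higher). -/
def Ranking.toWeak (r : Ranking A m) : WeakRanking A where
  ge a b := r a ≤ r b
  total a b := le_total _ _
  trans _ _ _ h1 h2 := le_trans h1 h2

/-- The position-reversal permutation. -/
def finRevPerm (m : ℕ) : Equiv.Perm (Fin m) :=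
  ⟨Fin.rev, Fin.rev, Fin.rev_rev, Fin.rev_rev⟩

/-- The reversed strict ranking. -/
def Ranking.revR (r : Ranking A m) : Ranking A m := r.trans (finRevPerm m)

/-- Kendall-Tau distance with ties between two weak rankings: the sum over unordered pairs
of distinct alternatives of `D + T/2`, realized as half the sum over ordered pairs. -/
def KT [Fintype A] (r1 r2 : WeakRanking A) : ℝ :=
  (∑ p ∈ Finset.univ.offDiag,
      ((if (r1.strict p.1 p.2 ∧ r2.strict p.2 p.1) ∨ (r1.strict p.2 p.1 ∧ r2.strict p.1 p.2)
          then (1 : ℝ) else 0)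
        + (if r1.tied p.1 p.2 ∨ r2.tied p.1 p.2 then (1 : ℝ) else 0) / 2)) / 2

/-- A profile: the list of the voters' strict rankings. -/
abbrev Profile (A : Type*) (m : ℕ) := List (Ranking A m)

/-- A social welfare function. -/
abbrev SWF (A : Type*) (m : ℕ) := Profile A m → WeakRanking A

/-- Reverse every voter's ranking. -/
def revProfile (σ : Profile A m) : Profile A m := σ.map Ranking.revR

/-- A monotone positional scoring vector `1 = s₁ ≥ s₂ ≥ … ≥ sₘ = 0`. -/
structure ScoreVec (m : ℕ) where
  s : Fin m → ℝ
  anti : Antitone s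
  first : ∀ h : 0 < m, s ⟨0, h⟩ = 1
  last : ∀ h : 0 < m, s ⟨m - 1, Nat.sub_lt h Nat.one_pos⟩ = 0

/-- Total score of alternative `a` in profile `σ`. -/
def totalScore (sv : ScoreVec m) (σ : Profile A m) (a : A) : ℝ :=
  (σ.map fun r => sv.s (r a)).sum

/-- The positional scoring rule associated to a scoring vector. -/
def posSWF (sv : ScoreVec m) : SWF A m := fun σ =>
  { ge := fun a b => totalScore sv σ b ≤ totalScore sv σ a
    total := fun _ _ => le_total _ _
    trans := fun _ _ _ h1 h2 => le_trans h2 h1 }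

/-- The plurality scoring vector `(1,0,…,0)`. -/
def pluralityVec (m : ℕ) (hm : 2 ≤ m) : ScoreVec m where
  s i := if i.val = 0 then 1 else 0
  anti := by
    intro i j hij
    have h' : i.val ≤ j.val := hij
    dsimp only
    by_cases hj : j.val = 0
    · have hi : i.val = 0 := by omega
      simp [hi, hj]
    · by_cases hi : i.val = 0 <;> simp [hi, hj]
  first h := by simp
  last h := by
    have h' : m - 1 ≠ 0 := by omega
    simp [h']

/-- The veto scoring vector `(1,…,1,0)`. -/
def vetoVec (m : ℕ) (hm : 2 ≤ m) : ScoreVec m where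
  s i := if i.val = m - 1 then 0 else 1
  anti := by
    intro i j hij
    have h' : i.val ≤ j.val := hij
    dsimp only
    by_cases hi : i.val = m - 1
    · have hj : j.val = m - 1 := by have := j.isLt; omega
      simp [hi, hj]
    · by_cases hj : j.val = m - 1 <;> simp [hi, hj]
  first h := by
    have h' : (0 : ℕ) ≠ m - 1 := by omega
    simp [h']
  last h := by simp

/-- The reverse scoring vector, `s'_j = 1 - s_{m+1-j}`. -/
def ScoreVec.revVec (sv : ScoreVec m) : ScoreVec m where
  s j := 1 - sv.s j.rev
  anti := by
    intro i j hij
    have h1 : j.rev ≤ i.rev := by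
      simp only [Fin.le_def, Fin.val_rev]
      have h' : i.val ≤ j.val := hij
      omega
    have h2 := sv.anti h1
    dsimp only
    linarith
  first h := by
    have h1 : (⟨0, h⟩ : Fin m).rev = ⟨m - 1, Nat.sub_lt h Nat.one_pos⟩ := by
      ext
      simp [Fin.val_rev]
    try dsimp only
    rw [h1, sv.last h]
    ring
  last h := by
    have h1 : (⟨m - 1, Nat.sub_lt h Nat.one_pos⟩ : Fin m).rev = ⟨0, h⟩ := by
      ext
      simp only [Fin.val_rev]
      omega
    try dsimp only
    rw [h1, sv.first h]
    ring

/-- One side of the split of the profile `σ` given by assignment `β`. -/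
def subProfile (σ : Profile A m) (β : Fin σ.length → Bool) (b : Bool) : Profile A m :=
  ((List.finRange σ.length).filter fun i => β i == b).map σ.get

/-- Apply an SWF, producing the all-tied ranking on an empty (sub)profile. -/
def applySplit (f : SWF A m) (σ : Profile A m) : WeakRanking A :=
  if σ = [] then WeakRanking.allTied A else f σ

/-- Expected Kendall-Tau disagreement of `f` between the two sides of a uniformly random
split of `σ` (each voter placed independently and uniformly on one of the two sides). -/
def expDisagree [Fintype A] (f : SWF A m) (σ : Profile A m) : ℝ :=
  (∑ β : Fin σ.length → Bool,
      KT (applySplit f (subProfile σ β true)) (applySplit f (subProfile σ β false)))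
    / 2 ^ σ.length

/-- Aggregation by Consistency over a set of SWFs: the rules minimizing expected
disagreement across a random split. -/
def AbC [Fintype A] (F : Set (SWF A m)) (σ : Profile A m) : Set (SWF A m) :=
  {f | f ∈ F ∧ ∀ g ∈ F, expDisagree f σ ≤ expDisagree g σ}

/-- Aggregation by Consistency over a set of positional scoring vectors. -/
def AbCVec [Fintype A] (F : Set (ScoreVec m)) (σ : Profile A m) : Set (ScoreVec m) :=
  {sv | sv ∈ F ∧ ∀ sv' ∈ F, expDisagree (posSWF sv) σ ≤ expDisagree (posSWF sv') σ}

/-- All permutations of the positions that fix every position outside `S`. -/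
def permsOn (S : Finset (Fin m)) : List (Equiv.Perm (Fin m)) :=
  (Finset.univ.filter fun π : Equiv.Perm (Fin m) => ∀ i ∉ S, π i = i).toList

/-- The `k`-shuffling of profile `σ` with respect to the set of positions `S`: each voter's
ranking is replaced by `k·m!` copies, split evenly among the `|S|!` permutations of `S`. -/
def shuffle (S : Finset (Fin m)) (k : ℕ) (σ : Profile A m) : Profile A m :=
  σ.flatMap fun r =>
    (permsOn S).flatMap fun π =>
      List.replicate (k * Nat.factorial m / Nat.factorial S.card) (r.trans π)

/-- The positions `2,…,m` (0-indexed: `1,…,m-1`). -/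
def tailPositions (m : ℕ) : Finset (Fin m) := Finset.univ.filter fun i => 1 ≤ i.val

/-- Number of voters ranking `a` first. -/
def topCount (σ : Profile A m) (a : A) : ℕ := σ.countP fun r => (r a).val == 0

/-- A weak ranking has no ties among distinct alternatives. -/
def NoTies (w : WeakRanking A) : Prop := ∀ a b : A, a ≠ b → ¬ w.tied a b

/-- Probability (over a uniformly random split of `σ`) that the outputs of `f` on the two
sides order `a` and `b` strictly oppositely. -/
def probD [Fintype A] (f : SWF A m) (σ : Profile A m) (a b : A) : ℝ :=
  ((Finset.univ.filter fun β : Fin σ.length → Bool =>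
      ((applySplit f (subProfile σ β true)).strict a b ∧
        (applySplit f (subProfile σ β false)).strict b a) ∨
      ((applySplit f (subProfile σ β true)).strict b a ∧
        (applySplit f (subProfile σ β false)).strict a b)).card : ℝ) / 2 ^ σ.length

/-- Probability (over a uniformly random split of `σ`) that `a` and `b` are tied in the
output of `f` on at least one side. -/
def probT [Fintype A] (f : SWF A m) (σ : Profile A m) (a b : A) : ℝ :=
  ((Finset.univ.filter fun β : Fin σ.length → Bool =>
      (applySplit f (subProfile σ β true)).tied a b ∨
      (applySplit f (subProfile σ β false)).tied a b).card : ℝ) / 2 ^ σ.length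

/-- A rule picking rule over sets of positional scoring vectors. -/
abbrev RPRVec (A : Type*) (m : ℕ) := Set (ScoreVec m) → Profile A m → Set (ScoreVec m)

/-- An RPR returns a nonempty subset of the candidate rules. -/
def IsRPR (Z : RPRVec A m) : Prop := ∀ F σ, Z F σ ⊆ F ∧ (Z F σ).Nonempty

/-- Anonymity of an RPR: invariance under permuting voters. -/
def AnonymousRPR (Z : RPRVec A m) : Prop :=
  ∀ (F : Set (ScoreVec m)) (σ σ' : Profile A m), σ.Perm σ' → Z F σ = Z F σ'

/-- Reversal symmetry of an RPR. -/
def ReversalSymmetric (Z : RPRVec A m) : Prop :=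
  ∀ F : Set (ScoreVec m), ScoreVec.revVec '' F = F →
    ∀ σ : Profile A m, ScoreVec.revVec '' (Z F σ) = Z F (revProfile σ)

/-- Plurality-shuffling consistency of an RPR. -/
def PSConsistent (hm : 2 ≤ m) (Z : RPRVec A m) : Prop :=
  ∀ F : Set (ScoreVec m), F.Finite → pluralityVec m hm ∈ F →
    ∀ σ : Profile A m, NoTies (posSWF (pluralityVec m hm) σ) →
      ∃ k : ℕ, 1 ≤ k ∧ ∀ k', k ≤ k' →
        Z F (shuffle (tailPositions m) k' σ) = {pluralityVec m hm}

/-- Union consistency of an RPR. -/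
def UnionConsistent (Z : RPRVec A m) : Prop :=
  ∀ (F : Set (ScoreVec m)) (σa σb : Profile A m), (Z F σa ∩ Z F σb).Nonempty →
    Z F (σa ++ σb) = Z F σa ∩ Z F σb

/-- The welfare-maximizing RPR with utility function `u`. -/
def welfareMax (u : Ranking A m → WeakRanking A → ℝ) : RPRVec A m := fun F σ =>
  {sv | sv ∈ F ∧ ∀ sv' ∈ F,
      (σ.map fun r => u r (posSWF sv' σ)).sum ≤ (σ.map fun r => u r (posSWF sv σ)).sum}

/-- The SWF induced by a (vector-valued) RPR, where it is singleton-valued. -/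
def inducedVec (Z : RPRVec A m) (F : Set (ScoreVec m)) : SWF A m := fun σ =>
  if h : ∃ sv, Z F σ = {sv} then posSWF h.choose σ else WeakRanking.allTied A

/-- The SWF induced by an (SWF-valued) RPR, where it is singleton-valued. -/
def inducedSWF (Z : Set (SWF A m) → Profile A m → Set (SWF A m)) (F : Set (SWF A m)) :
    SWF A m := fun σ =>
  if h : ∃ f, Z F σ = {f} then h.choose σ else WeakRanking.allTied A

/-- The SWF induced by AbC over scoring vectors. -/
def inducedAbCVec [Fintype A] (F : Set (ScoreVec m)) : SWF A m := fun σ =>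
  if h : ∃ sv, AbCVec F σ = {sv} then posSWF h.choose σ else WeakRanking.allTied A

/-- Anonymity of an SWF. -/
def AnonymousSWF (f : SWF A m) : Prop :=
  ∀ σ σ' : Profile A m, σ.Perm σ' → f σ = f σ'

/-- Relabeling of a weak ranking along a permutation of the alternatives. -/
def permuteWeak (π : Equiv.Perm A) (w : WeakRanking A) : WeakRanking A where
  ge a b := w.ge (π.symm a) (π.symm b)
  total a b := w.total _ _
  trans _ _ _ h1 h2 := w.trans _ _ _ h1 h2

/-- Neutrality of an SWF: permuting the alternatives permutes the output accordingly. -/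
def NeutralSWF (f : SWF A m) : Prop :=
  ∀ (π : Equiv.Perm A) (σ : Profile A m),
    f (σ.map fun r => π.symm.trans r) = permuteWeak π (f σ)

/-- `a` pairwise defeats `b` in profile `σ`. -/
def pairwiseDefeats (σ : Profile A m) (a b : A) : Prop :=
  (σ.countP fun r => decide (r b < r a)) < (σ.countP fun r => decide (r a < r b))

/-- A set `S` is dominant if every member pairwise defeats every non-member. -/
def DominantSet [Fintype A] (σ : Profile A m) (S : Finset A) : Prop :=
  ∀ a ∈ S, ∀ b ∉ S, pairwiseDefeats σ a b

/-- The Smith set: the smallest dominant set (the intersection of all dominant sets). -/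
def SmithSet [Fintype A] (σ : Profile A m) : Finset A :=
  Finset.univ.filter fun a => ∀ S : Finset A, DominantSet σ S → a ∈ S

/-- `a` is among the top-ranked alternatives of `w`. -/
def isTop (w : WeakRanking A) (a : A) : Prop := ∀ b, w.ge a b

def SmithCriterion [Fintype A] (f : SWF A m) : Prop :=
  ∀ (σ : Profile A m) (a : A), isTop (f σ) a → a ∈ SmithSet σ

def CondorcetConsistent [Fintype A] (f : SWF A m) : Prop :=
  ∀ (σ : Profile A m) (c : A), SmithSet σ = {c} →
    ∀ a, isTop (f σ) a → a ∈ SmithSet σ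

def MajorityWinnerCriterion [Fintype A] (f : SWF A m) : Prop :=
  ∀ (σ : Profile A m) (c : A), SmithSet σ = {c} → σ.length < 2 * topCount σ c →
    ∀ a, isTop (f σ) a → a ∈ SmithSet σ

def PairwiseMajorityConsistent (f : SWF A m) : Prop :=
  ∀ (σ : Profile A m) (r : WeakRanking A),
    (∀ a b, r.strict a b ↔ pairwiseDefeats σ a b) → f σ = r

def UnanimousSWF (f : SWF A m) : Prop :=
  ∀ (σ : Profile A m) (r : Ranking A m), σ ≠ [] → (∀ x ∈ σ, x = r) →
    f σ = Ranking.toWeak r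

/-- Rank of `a` in weak ranking `w`: one plus the number of alternatives strictly above. -/
def rankIn [Fintype A] (w : WeakRanking A) (a : A) : ℕ :=
  1 + (Finset.univ.filter fun b => w.strict b a).card

/-- `r'` is obtained from `r` by (weakly) raising `a`, everything else unchanged. -/
def RaisesWeak (a : A) (r r' : Ranking A m) : Prop :=
  r' a ≤ r a ∧ ∀ b c : A, b ≠ a → c ≠ a → (r b < r c ↔ r' b < r' c)

/-- Monotonicity of an SWF: raising an alternative never hurts its rank. -/
def MonotonicSWF [Fintype A] (f : SWF A m) : Prop :=
  ∀ (a : A) (σ σ' : Profile A m), List.Forall₂ (RaisesWeak a) σ σ' →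
    rankIn (f σ') a ≤ rankIn (f σ) a

/-- Total score of `a` for a list of (position ↦ alternative) ballots of length `ℓ`. -/
def ballotScore [Fintype A] {ℓ : ℕ} (sv : ScoreVec ℓ) (P : List (Fin ℓ → A)) (a : A) : ℝ :=
  (P.map fun b => ∑ i : Fin ℓ, if b i = a then sv.s i else 0).sum

/-- A scoring vector achieves perfect consistency on the given split `(P1, P2)`. -/
def PerfectConsistency [Fintype A] {ℓ : ℕ} (sv : ScoreVec ℓ)
    (P1 P2 : List (Fin ℓ → A)) : Prop :=
  ∀ a b : A, a ≠ b →
    0 < (ballotScore sv P1 a - ballotScore sv P1 b) *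
        (ballotScore sv P2 a - ballotScore sv P2 b)

/-- Complete a `k`-partial ballot to a full ballot on `m` positions by placing the missing
alternatives at the bottom, in a fixed order. -/
def completeBallot [Fintype A] [LinearOrder A] {k m : ℕ} (hk : 0 < k)
    (b : Fin k → A) : Fin m → A := fun j =>
  if h : j.val < k then b ⟨j.val, h⟩
  else ((Finset.univ \ Finset.univ.image b).sort (· ≤ ·)).getD (j.val - k) (b ⟨0, hk⟩)

/-- `k`-shuffling for (position ↦ alternative) ballots. -/
def shuffleBallots {m : ℕ} (S : Finset (Fin m)) (k : ℕ) (P : List (Fin m → A)) :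
    List (Fin m → A) :=
  P.flatMap fun f =>
    (permsOn S).flatMap fun π =>
      List.replicate (k * Nat.factorial m / Nat.factorial S.card) (f ∘ π.symm)

/-!
Shuffling the positions `2,…,m` of a ballot in all possible ways gives every alternative that is
not on top the same average score, so in `Shuffle_{[2,m]}^k(σ)` the total score of an alternative
under any scoring vector is a positive affine function of its plurality score in `σ`. All
positional rules therefore output the same ranking there, all of them attain the same welfare, and
a welfare-maximizing RPR returns the whole of `F`. For `m ≥ 3` this already fails plurality-shuffling
consistency for `F = {plurality, veto}` and any profile with distinct plurality scores.
-/

open Finset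

def permSet (S : Finset (Fin m)) : Finset (Equiv.Perm (Fin m)) :=
  univ.filter fun π => ∀ i ∉ S, π i = i

lemma mem_permSet {S : Finset (Fin m)} {π : Equiv.Perm (Fin m)} :
    π ∈ permSet S ↔ ∀ i ∉ S, π i = i := by
  simp [permSet]

/-- What an alternative in position `p` of a ballot scores over all reshufflings of `S`. -/
def orbitScore (sv : ScoreVec m) (S : Finset (Fin m)) (p : Fin m) : ℝ :=
  ∑ π ∈ permSet S, sv.s (π p)

lemma ScoreVec.s_le_one (sv : ScoreVec m) (p : Fin m) : sv.s p ≤ 1 := by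
  have h0 : 0 < m := p.pos
  simpa [sv.first h0] using sv.anti (show (⟨0, h0⟩ : Fin m) ≤ p from Nat.zero_le p.val)

lemma totalScore_flatMap {ι : Type*} (sv : ScoreVec m) (l : List ι) (g : ι → Profile A m)
    (a : A) : totalScore sv (l.flatMap g) a = (l.map fun i => totalScore sv (g i) a).sum := by
  induction l with
  | nil => simp [totalScore]
  | cons i l ih => simp_all [totalScore]

lemma totalScore_replicate (sv : ScoreVec m) (n : ℕ) (r : Ranking A m) (a : A) :
    totalScore sv (List.replicate n r) a = n * sv.s (r a) := by
  simp [totalScore]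

lemma totalScore_shuffle (sv : ScoreVec m) (S : Finset (Fin m)) (k : ℕ) (σ : Profile A m)
    (a : A) :
    totalScore sv (shuffle S k σ) a
      = (k * m.factorial / S.card.factorial : ℕ)
          * (σ.map fun r => orbitScore sv S (r a)).sum := by
  simp only [shuffle, totalScore_flatMap, totalScore_replicate, Equiv.trans_apply,
    show permsOn S = (permSet S).toList from rfl, sum_map_toList, ← mul_sum,
    List.sum_map_mul_left, orbitScore]

lemma orbitScore_of_notMem (sv : ScoreVec m) {S : Finset (Fin m)} {p : Fin m} (hp : p ∉ S) :
    orbitScore sv S p = #(permSet S) * sv.s p := by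
  rw [orbitScore, Finset.sum_congr rfl fun π hπ => by rw [mem_permSet.mp hπ p hp],
    sum_const, nsmul_eq_mul]

lemma swap_mem_permSet {S : Finset (Fin m)} {p q : Fin m} (hp : p ∈ S) (hq : q ∈ S) :
    Equiv.swap p q ∈ permSet S :=
  mem_permSet.mpr fun _ hi =>
    Equiv.swap_apply_of_ne_of_ne (ne_of_mem_of_not_mem hp hi).symm
      (ne_of_mem_of_not_mem hq hi).symm

lemma mul_mem_permSet {S : Finset (Fin m)} {π τ : Equiv.Perm (Fin m)} (hπ : π ∈ permSet S)
    (hτ : τ ∈ permSet S) : π * τ ∈ permSet S :=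
  mem_permSet.mpr fun i hi => by
    rw [Equiv.Perm.mul_apply, mem_permSet.mp hτ i hi, mem_permSet.mp hπ i hi]

lemma orbitScore_eq_of_mem (sv : ScoreVec m) {S : Finset (Fin m)} {p q : Fin m} (hp : p ∈ S)
    (hq : q ∈ S) : orbitScore sv S p = orbitScore sv S q := by
  have hswap := swap_mem_permSet hp hq
  refine sum_equiv (Equiv.mulRight (Equiv.swap p q))
    (fun π => ⟨fun hπ => ?_, fun hπ => ?_⟩) ?_
  · exact mul_mem_permSet hπ hswap
  · simpa [mul_assoc] using mul_mem_permSet hπ hswap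
  · simp

lemma orbitScore_lt_card (sv : ScoreVec m) {S : Finset (Fin m)} {p q : Fin m} (hp : p ∈ S)
    (hq : q ∈ S) (hsq : sv.s q < 1) : orbitScore sv S p < #(permSet S) := by
  rw [← mul_one (#(permSet S) : ℝ), ← nsmul_eq_mul, ← sum_const]
  refine sum_lt_sum (fun π _ => sv.s_le_one _) ⟨Equiv.swap p q, swap_mem_permSet hp hq, ?_⟩
  rwa [Equiv.swap_apply_left]

lemma mem_tailPositions {p : Fin m} : p ∈ tailPositions m ↔ p.val ≠ 0 := by
  simp [tailPositions, Nat.one_le_iff_ne_zero]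

lemma exists_orbitScore_tailPositions_eq (hm : 2 ≤ m) (sv : ScoreVec m) :
    ∃ α > 0, ∃ β, ∀ p,
      orbitScore sv (tailPositions m) p = α * (pluralityVec m hm).s p + β := by
  have h0 : 0 < m := by omega
  have hsecond : (⟨1, by omega⟩ : Fin m) ∈ tailPositions m :=
    mem_tailPositions.mpr one_ne_zero
  have hlast : (⟨m - 1, by omega⟩ : Fin m) ∈ tailPositions m :=
    mem_tailPositions.mpr (by simp only; omega)
  have hlt := orbitScore_lt_card sv hsecond hlast (by rw [sv.last h0]; exact one_pos)
  refine ⟨_, sub_pos.mpr hlt, orbitScore sv (tailPositions m) ⟨1, by omega⟩, fun p => ?_⟩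
  by_cases hp : p.val = 0
  · have hp0 : p = ⟨0, h0⟩ := Fin.ext hp
    rw [orbitScore_of_notMem sv fun h => mem_tailPositions.mp h hp, hp0, sv.first h0]
    simp [pluralityVec]
  · rw [orbitScore_eq_of_mem sv (mem_tailPositions.mpr hp) hsecond]
    simp [pluralityVec, hp]

lemma posSWF_eq_of_totalScore_eq {sv sv' : ScoreVec m} {τ σ : Profile A m} {α β : ℝ}
    (hα : 0 < α) (h : ∀ a, totalScore sv τ a = α * totalScore sv' σ a + β) :
    (posSWF sv τ : WeakRanking A) = posSWF sv' σ := by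
  simp only [posSWF, h, add_le_add_iff_right, mul_le_mul_iff_right₀ hα]

lemma mul_factorial_div_factorial_card_pos (S : Finset (Fin m)) {k : ℕ} (hk : 1 ≤ k) :
    0 < k * m.factorial / S.card.factorial := by
  refine Nat.div_pos ?_ (Nat.factorial_pos _)
  calc S.card.factorial ≤ m.factorial :=
        Nat.factorial_le ((card_le_univ S).trans (Fintype.card_fin m).le)
    _ ≤ k * m.factorial := Nat.le_mul_of_pos_left _ hk

lemma posSWF_shuffle_tailPositions (hm : 2 ≤ m) (sv : ScoreVec m) (σ : Profile A m) {k : ℕ}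
    (hk : 1 ≤ k) :
    (posSWF sv (shuffle (tailPositions m) k σ) : WeakRanking A)
      = posSWF (pluralityVec m hm) σ := by
  obtain ⟨α, hα, β, horbit⟩ := exists_orbitScore_tailPositions_eq hm sv
  set c : ℕ := k * m.factorial / (tailPositions m).card.factorial
  have hc : 0 < c := mul_factorial_div_factorial_card_pos (tailPositions m) hk
  refine posSWF_eq_of_totalScore_eq (α := c * α) (β := c * (σ.length * β))
    (by positivity) fun a => ?_
  rw [totalScore_shuffle]
  simp only [horbit, totalScore, List.sum_map_add, List.sum_map_mul_left, List.map_const',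
    List.sum_replicate, nsmul_eq_mul]
  ring

lemma welfareMax_eq_self_of_posSWF_eq (u : Ranking A m → WeakRanking A → ℝ)
    (F : Set (ScoreVec m)) {σ : Profile A m}
    (h : ∀ sv sv' : ScoreVec m, (posSWF sv σ : WeakRanking A) = posSWF sv' σ) :
    welfareMax u F σ = F := by
  ext sv
  exact ⟨fun hsv => hsv.1, fun hsv => ⟨hsv, fun sv' _ => by rw [h sv' sv]⟩⟩

lemma welfareMax_shuffle_tailPositions (hm : 2 ≤ m) (u : Ranking A m → WeakRanking A → ℝ)
    (F : Set (ScoreVec m)) (σ : Profile A m) {k : ℕ} (hk : 1 ≤ k) :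
    welfareMax u F (shuffle (tailPositions m) k σ) = F :=
  welfareMax_eq_self_of_posSWF_eq u F fun sv sv' => by
    rw [posSWF_shuffle_tailPositions hm sv σ hk, posSWF_shuffle_tailPositions hm sv' σ hk]

lemma totalScore_pluralityVec (hm : 2 ≤ m) (σ : Profile A m) (a : A) :
    totalScore (pluralityVec m hm) σ a = topCount σ a := by
  induction σ with
  | nil => simp [totalScore, topCount]
  | cons r σ ih =>
    simp only [totalScore, topCount, List.map_cons, List.sum_cons, List.countP_cons] at ih ⊢
    rw [ih]
    by_cases h : (r a).val = 0 <;> simp [pluralityVec, h, add_comm]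

def rankingWithTop (e : Ranking A m) (h : 0 < m) (a : A) : Ranking A m :=
  e.trans (Equiv.swap (e a) ⟨0, h⟩)

lemma rankingWithTop_apply_eq_zero_iff (e : Ranking A m) (h : 0 < m) {a b : A} :
    (rankingWithTop e h a b).val = 0 ↔ b = a := by
  rw [← Fin.val_mk h, ← Fin.ext_iff, rankingWithTop, Equiv.trans_apply,
    Equiv.swap_apply_eq_iff, Equiv.swap_apply_right, e.apply_eq_iff_eq]

lemma topCount_flatMap_rankingWithTop [Fintype A] (e : Ranking A m) (h : 0 < m) (n : A → ℕ)
    (b : A) :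
    topCount (univ.toList.flatMap fun a => List.replicate (n a) (rankingWithTop e h a)) b
      = n b := by
  simp [topCount, List.countP_flatMap, List.countP_replicate, Function.comp_def,
    rankingWithTop_apply_eq_zero_iff]

lemma exists_noTies_pluralityVec [Fintype A] (hm : 2 ≤ m) (e : Ranking A m) :
    ∃ σ : Profile A m, NoTies (posSWF (pluralityVec m hm) σ) := by
  refine ⟨univ.toList.flatMap fun a => List.replicate (e a) (rankingWithTop e (by omega) a),
    fun a b hab htied => hab (e.injective (Fin.ext ?_))⟩
  have hscore := le_antisymm htied.2 htied.1
  simpa only [totalScore_pluralityVec, topCount_flatMap_rankingWithTop, Nat.cast_inj] using hscore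

lemma vetoVec_ne_pluralityVec (hm : 2 ≤ m) (hm3 : 3 ≤ m) :
    vetoVec m hm ≠ pluralityVec m hm := by
  intro h
  have hsecond := congrFun (congrArg ScoreVec.s h) ⟨1, by omega⟩
  have hne : (1 : ℕ) ≠ m - 1 := by omega
  simp [vetoVec, pluralityVec, hne] at hsecond

lemma not_PSConsistent_welfareMax [Fintype A] (hm : 2 ≤ m) (hm3 : 3 ≤ m) (e : Ranking A m)
    (u : Ranking A m → WeakRanking A → ℝ) : ¬ PSConsistent hm (welfareMax u) := by
  intro hPSC
  obtain ⟨σ, hσ⟩ := exists_noTies_pluralityVec hm e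
  obtain ⟨k, hk, hZ⟩ :=
    hPSC {pluralityVec m hm, vetoVec m hm} (Set.toFinite _) (Set.mem_insert _ _) σ hσ
  have hveto : vetoVec m hm ∈ ({pluralityVec m hm} : Set (ScoreVec m)) := by
    rw [← hZ k le_rfl, welfareMax_shuffle_tailPositions hm u _ σ hk]
    exact Set.mem_insert_of_mem _ rfl
  exact vetoVec_ne_pluralityVec hm hm3 hveto

/-- For every welfare-maximizing RPR `Z`, every set `F ⊆ F_S`, every profile
`σ`, and every `k ∈ ℤ₊`, `Z(F, Shuffle_{[2,m]}^k(σ)) = F`; consequently, if `m ≥ 3`, every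
welfare-maximizing RPR fails plurality-shuffling consistency. -/
theorem welfareMax_shuffle_and_fails_PSC {A : Type*} [Fintype A] {m : ℕ} (hm : 2 ≤ m)
    (hcard : Fintype.card A = m) :
    (∀ (u : Ranking A m → WeakRanking A → ℝ) (F : Set (ScoreVec m)) (σ : Profile A m)
        (k : ℕ), 1 ≤ k → welfareMax u F (shuffle (tailPositions m) k σ) = F) ∧
    (3 ≤ m → ∀ u : Ranking A m → WeakRanking A → ℝ, ¬ PSConsistent hm (welfareMax u)) :=
  ⟨fun u F σ _ hk => welfareMax_shuffle_tailPositions hm u F σ hk,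
    fun hm3 => not_PSConsistent_welfareMax hm hm3 (Fintype.equivFinOfCardEq hcard)⟩
end
end

section
/- If every SWF in a set F of candidate rules is anonymous and neutral, and AbC(F,σ) is a singleton for every profile σ, then the induced SWF f_{AbC}^F (which maps σ to f(σ) for the unique f ∈ AbC(F,σ)) is anonymous and neutral. -/
open scoped Classical

noncomputable section

variable {A : Type*} {m : ℕ}

/- Permuting the voters of `σ`, or relabelling the alternatives in every ballot, induces a
bijection of random splits under which the two sides are permuted, resp. relabelled. So for an
anonymous and neutral rule the two outputs stay the same, resp. are relabelled alike, and since
`KT` is invariant under relabelling, the expected disagreement of every rule in `F` is unchanged.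
Hence `AbC F σ` is invariant too, and its unique member is anonymous and neutral. -/

lemma permuteWeak_allTied (π : Equiv.Perm A) :
    permuteWeak π (WeakRanking.allTied A) = WeakRanking.allTied A :=
  rfl

lemma KT_permuteWeak [Fintype A] (π : Equiv.Perm A) (w₁ w₂ : WeakRanking A) :
    KT (permuteWeak π w₁) (permuteWeak π w₂) = KT w₁ w₂ := by
  unfold KT
  congr 1
  exact Finset.sum_equiv (Equiv.prodCongr π.symm π.symm) (fun p => by simp) fun _ _ => rfl

lemma List.Perm.exists_equiv_get {α : Type*} {l l' : List α} (h : l.Perm l') :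
    ∃ e : Fin l'.length ≃ Fin l.length, ∀ i, l'.get i = l.get (e i) := by
  induction h with
  | nil => exact ⟨Equiv.refl _, fun i => i.elim0⟩
  | cons x _ ih =>
    obtain ⟨e, he⟩ := ih
    refine ⟨(finSuccEquiv _).trans ((Equiv.optionCongr e).trans (finSuccEquiv _).symm),
      fun i => Fin.cases ?_ (fun j => ?_) i⟩
    · simp
    · simpa using he j
  | swap x y l =>
    refine ⟨Equiv.swap 0 1, fun i => ?_⟩
    rcases i with ⟨_ | _ | k, hk⟩
    · rfl
    · rfl
    · rw [Equiv.swap_apply_of_ne_of_ne (by simp [Fin.ext_iff]) (by simp [Fin.ext_iff])]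
      rfl
  | trans _ _ ih₁ ih₂ =>
    obtain ⟨e₁, he₁⟩ := ih₁
    obtain ⟨e₂, he₂⟩ := ih₂
    exact ⟨e₂.trans e₁, fun i => by rw [he₂, he₁]; rfl⟩

lemma subProfile_reindex {σ σ' : Profile A m} (g : Ranking A m → Ranking A m)
    (e : Fin σ'.length ≃ Fin σ.length) (he : ∀ i, σ'.get i = g (σ.get (e i)))
    (β : Fin σ.length → Bool) (b : Bool) :
    (subProfile σ' (β ∘ e) b).Perm ((subProfile σ β b).map g) := by
  have hidx : (((List.finRange σ'.length).filter fun i => β (e i) == b).map e).Perm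
      ((List.finRange σ.length).filter fun j => β j == b) := by
    rw [List.perm_ext_iff_of_nodup (((List.nodup_finRange _).filter _).map e.injective)
      ((List.nodup_finRange _).filter _)]
    intro j
    simp only [List.mem_map, List.mem_filter, List.mem_finRange, true_and]
    exact ⟨fun ⟨i, hi, hij⟩ => hij ▸ hi, fun hj => ⟨e.symm j, by simpa using hj, by simp⟩⟩
  have hget : σ'.get = (fun j => g (σ.get j)) ∘ e := funext he
  unfold subProfile
  rw [hget, ← List.map_map, List.map_map (f := List.get σ)]
  exact hidx.map _

lemma applySplit_of_perm {f : SWF A m} (hf : AnonymousSWF f) {τ τ' : Profile A m}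
    (h : τ.Perm τ') : applySplit f τ = applySplit f τ' := by
  by_cases hτ : τ = []
  · subst hτ
    simp [applySplit, h.symm.eq_nil]
  · rw [applySplit, applySplit, if_neg hτ, if_neg (by rintro rfl; exact hτ h.eq_nil), hf τ τ' h]

lemma applySplit_relabel {f : SWF A m} (hf : NeutralSWF f) (π : Equiv.Perm A)
    (τ : Profile A m) :
    applySplit f (τ.map fun r => π.symm.trans r) = permuteWeak π (applySplit f τ) := by
  by_cases hτ : τ = []
  · simp [applySplit, hτ, permuteWeak_allTied]
  · rw [applySplit, applySplit, if_neg (by simpa using hτ), if_neg hτ, hf π τ]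

lemma expDisagree_eq_of_reindex [Fintype A] {f : SWF A m} {σ σ' : Profile A m}
    (g : Ranking A m → Ranking A m) (φ : WeakRanking A → WeakRanking A)
    (hKT : ∀ w₁ w₂, KT (φ w₁) (φ w₂) = KT w₁ w₂)
    (hf : ∀ τ τ', τ'.Perm (τ.map g) → applySplit f τ' = φ (applySplit f τ))
    (e : Fin σ'.length ≃ Fin σ.length) (he : ∀ i, σ'.get i = g (σ.get (e i))) :
    expDisagree f σ' = expDisagree f σ := by
  have hlen : σ'.length = σ.length := by simpa using Fintype.card_congr e
  have hsplit : ∀ β b, applySplit f (subProfile σ' (β ∘ e) b) =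
      φ (applySplit f (subProfile σ β b)) := fun β b =>
    hf _ _ (subProfile_reindex g e he β b)
  unfold expDisagree
  congr 1
  · refine (Fintype.sum_equiv (e.symm.arrowCongr (Equiv.refl Bool)) _ _ fun β => ?_).symm
    change _ = KT (applySplit f (subProfile σ' (β ∘ e) true))
      (applySplit f (subProfile σ' (β ∘ e) false))
    rw [hsplit, hsplit, hKT]
  · rw [hlen]

lemma expDisagree_of_perm [Fintype A] {f : SWF A m} (hf : AnonymousSWF f)
    {σ σ' : Profile A m} (h : σ.Perm σ') : expDisagree f σ = expDisagree f σ' := by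
  obtain ⟨e, he⟩ := h.symm.exists_equiv_get
  exact expDisagree_eq_of_reindex id id (fun _ _ => rfl)
    (fun τ τ' hτ => applySplit_of_perm hf (by simpa using hτ)) e he

lemma expDisagree_relabel [Fintype A] {f : SWF A m} (hfa : AnonymousSWF f)
    (hfn : NeutralSWF f) (π : Equiv.Perm A) (σ : Profile A m) :
    expDisagree f (σ.map fun r => π.symm.trans r) = expDisagree f σ :=
  expDisagree_eq_of_reindex _ (permuteWeak π) (KT_permuteWeak π)
    (fun τ τ' hτ => (applySplit_of_perm hfa hτ).trans (applySplit_relabel hfn π τ))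
    (finCongr (List.length_map _)) fun i => by simp

lemma AbC_congr [Fintype A] {F : Set (SWF A m)} {σ σ' : Profile A m}
    (h : ∀ f ∈ F, expDisagree f σ = expDisagree f σ') : AbC F σ = AbC F σ' :=
  Set.ext fun f => and_congr_right fun hf => forall₂_congr fun g hg => by rw [h f hf, h g hg]

lemma mem_of_AbC_eq_singleton [Fintype A] {F : Set (SWF A m)} {σ : Profile A m}
    {f : SWF A m} (h : AbC F σ = {f}) : f ∈ F :=
  (h.symm ▸ Set.mem_singleton f : f ∈ AbC F σ).1

lemma inducedSWF_apply_of_eq_singleton {Z : Set (SWF A m) → Profile A m → Set (SWF A m)}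
    {F : Set (SWF A m)} {σ : Profile A m} {f : SWF A m} (h : Z F σ = {f}) :
    inducedSWF Z F σ = f σ := by
  have hex : ∃ f, Z F σ = {f} := ⟨f, h⟩
  rw [inducedSWF, dif_pos hex, Set.singleton_injective (hex.choose_spec.symm.trans h)]

theorem abC_preserves_anonymity_neutrality_general {A : Type*} [Fintype A] {m : ℕ}
    (F : Set (SWF A m))
    (hanon : ∀ f ∈ F, AnonymousSWF f) (hneut : ∀ f ∈ F, NeutralSWF f)
    (hsingle : ∀ σ : Profile A m, ∃ f, AbC F σ = {f}) :
    AnonymousSWF (inducedSWF AbC F) ∧ NeutralSWF (inducedSWF AbC F) := by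
  refine ⟨fun σ σ' hσ => ?_, fun π σ => ?_⟩
  · obtain ⟨f, hf⟩ := hsingle σ
    have hf' : AbC F σ' = {f} :=
      (AbC_congr fun g hg => expDisagree_of_perm (hanon g hg) hσ).symm.trans hf
    rw [inducedSWF_apply_of_eq_singleton hf, inducedSWF_apply_of_eq_singleton hf']
    exact hanon f (mem_of_AbC_eq_singleton hf) σ σ' hσ
  · obtain ⟨f, hf⟩ := hsingle σ
    have hf' : AbC F (σ.map fun r => π.symm.trans r) = {f} :=
      (AbC_congr fun g hg => expDisagree_relabel (hanon g hg) (hneut g hg) π σ).trans hf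
    rw [inducedSWF_apply_of_eq_singleton hf, inducedSWF_apply_of_eq_singleton hf']
    exact hneut f (mem_of_AbC_eq_singleton hf) π σ

/-- AbC preserves anonymity and neutrality: if every SWF in `F` is anonymous
and neutral, and `AbC(F,σ)` is a singleton for every profile `σ`, then the induced SWF
`f_{AbC}^F` is anonymous and neutral. -/
theorem abC_preserves_anonymity_neutrality {A : Type*} [Fintype A] {m : ℕ} (hm : 2 ≤ m)
    (hcard : Fintype.card A = m) (F : Set (SWF A m))
    (hanon : ∀ f ∈ F, AnonymousSWF f) (hneut : ∀ f ∈ F, NeutralSWF f)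
    (hsingle : ∀ σ : Profile A m, ∃ f, AbC F σ = {f}) :
    AnonymousSWF (inducedSWF AbC F) ∧ NeutralSWF (inducedSWF AbC F) :=
  abC_preserves_anonymity_neutrality_general F hanon hneut hsingle
end
end

section
/- Let P be a k-partial profile over m alternatives with a given split of voters N = N_1 ⊔ N_2, |N_1| = |N_2|. Let P' be the completion of P and P'' = Shuffle_{[k,m]}^1(P'), with each copy of a voter assigned to the same side of the split as the original voter. Then there exists a length-k scoring vector achieving perfect consistency on the split of P if and only if there exists a length-m scoring vector achieving perfect consistency on the inherited split of P''. -/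
open scoped Classical

noncomputable section

variable {A : Type*} {m : ℕ}

/-! Shuffling the positions `k, …, m` of the completed ballots replaces the weights there by
their average `t`, so on every ballot the alternative in position `k` and the alternatives
missing from it score `t`. Up to the positive number of copies per voter and the additive
constant `t·|N_j|`, the shuffled completed profile therefore scores like `P` under the weights
`s_i - t` for `i < k` and `0` at position `k`; since `s_1 - t = 1 - t > 0`, normalizing gives a
length-`k` scoring vector. Conversely, a length-`k` vector padded with zeros is reproduced
exactly. -/

open Finset
open scoped Nat BigOperators

section Scores

variable {A : Type*} {ℓ : ℕ}

def scoreOn (s : Fin ℓ → ℝ) (b : Fin ℓ → A) (a : A) : ℝ :=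
  ∑ i, if b i = a then s i else 0

def scoreSum (s : Fin ℓ → ℝ) (P : List (Fin ℓ → A)) (a : A) : ℝ :=
  (P.map fun b => scoreOn s b a).sum

theorem scoreOn_smul (c : ℝ) (s : Fin ℓ → ℝ) (b : Fin ℓ → A) (a : A) :
    scoreOn (c • s) b a = c * scoreOn s b a := by
  simp [scoreOn, mul_sum, mul_ite]

theorem scoreSum_smul (c : ℝ) (s : Fin ℓ → ℝ) (P : List (Fin ℓ → A)) (a : A) :
    scoreSum (c • s) P a = c * scoreSum s P a := by
  simp [scoreSum, scoreOn_smul, List.sum_map_mul_left]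

theorem scoreSum_append (s : Fin ℓ → ℝ) (P Q : List (Fin ℓ → A)) (a : A) :
    scoreSum s (P ++ Q) a = scoreSum s P a + scoreSum s Q a := by
  simp [scoreSum]

theorem scoreSum_flatMap {β : Type*} (s : Fin ℓ → ℝ) (l : List β) (F : β → List (Fin ℓ → A))
    (a : A) : scoreSum s (l.flatMap F) a = (l.map fun x => scoreSum s (F x) a).sum := by
  induction l with
  | nil => simp [scoreSum]
  | cons x l ih => rw [List.flatMap_cons, scoreSum_append, ih, List.map_cons, List.sum_cons]

theorem scoreSum_replicate (s : Fin ℓ → ℝ) (n : ℕ) (b : Fin ℓ → A) (a : A) :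
    scoreSum s (List.replicate n b) a = n * scoreOn s b a := by
  simp [scoreSum]

theorem scoreOn_apply_of_injective (s : Fin ℓ → ℝ) {b : Fin ℓ → A} (hb : Function.Injective b)
    (i : Fin ℓ) : scoreOn s b (b i) = s i := by
  simp [scoreOn, hb.eq_iff]

theorem scoreOn_of_notMem_range (s : Fin ℓ → ℝ) {b : Fin ℓ → A} {a : A}
    (ha : a ∉ Set.range b) : scoreOn s b a = 0 :=
  sum_eq_zero fun i _ => if_neg fun h => ha ⟨i, h⟩

theorem scoreOn_comp_perm_symm (s : Fin ℓ → ℝ) (b : Fin ℓ → A) (π : Equiv.Perm (Fin ℓ))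
    (a : A) : scoreOn s (b ∘ π.symm) a = ∑ j, if b j = a then s (π j) else 0 := by
  rw [scoreOn, ← Equiv.sum_comp π]
  simp

def ConsistentWeights [Fintype A] (s : Fin ℓ → ℝ) (P1 P2 : List (Fin ℓ → A)) : Prop :=
  ∀ a b : A, a ≠ b →
    0 < (scoreSum s P1 a - scoreSum s P1 b) * (scoreSum s P2 a - scoreSum s P2 b)

theorem consistentWeights_iff_of_sub_eq [Fintype A] {ℓ' : ℕ} {s : Fin ℓ → ℝ}
    {s' : Fin ℓ' → ℝ} {P1 P2 : List (Fin ℓ → A)} {Q1 Q2 : List (Fin ℓ' → A)} {c : ℝ} (hc : c ≠ 0)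
    (h1 : ∀ a b, scoreSum s P1 a - scoreSum s P1 b = c * (scoreSum s' Q1 a - scoreSum s' Q1 b))
    (h2 : ∀ a b, scoreSum s P2 a - scoreSum s P2 b = c * (scoreSum s' Q2 a - scoreSum s' Q2 b)) :
    ConsistentWeights s P1 P2 ↔ ConsistentWeights s' Q1 Q2 := by
  simp only [ConsistentWeights, h1, h2, mul_mul_mul_comm c,
    mul_pos_iff_of_pos_left (mul_self_pos.2 hc)]

theorem consistentWeights_smul_iff [Fintype A] {s : Fin ℓ → ℝ} {P1 P2 : List (Fin ℓ → A)}
    {c : ℝ} (hc : c ≠ 0) : ConsistentWeights (c • s) P1 P2 ↔ ConsistentWeights s P1 P2 :=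
  consistentWeights_iff_of_sub_eq hc (fun _ _ => by simp only [scoreSum_smul, mul_sub])
    (fun _ _ => by simp only [scoreSum_smul, mul_sub])

end Scores

section Shuffle

variable {m : ℕ} (S : Finset (Fin m))

def fixingPerms : Finset (Equiv.Perm (Fin m)) :=
  univ.filter fun π => ∀ i ∉ S, π i = i

def blockAverage (s : Fin m → ℝ) : Fin m → ℝ :=
  fun j => if j ∈ S then 𝔼 i ∈ S, s i else s j

def copiesPerVoter (n : ℕ) : ℝ :=
  ((n * m ! / (#S)! : ℕ) : ℝ) * #(fixingPerms S)

variable {S}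

theorem permsOn_eq_toList : permsOn S = (fixingPerms S).toList := rfl

theorem mem_fixingPerms {π : Equiv.Perm (Fin m)} : π ∈ fixingPerms S ↔ ∀ i ∉ S, π i = i := by
  simp [fixingPerms]

theorem one_mem_fixingPerms : (1 : Equiv.Perm (Fin m)) ∈ fixingPerms S :=
  mem_fixingPerms.2 fun _ _ => rfl

theorem mul_mem_fixingPerms {π τ : Equiv.Perm (Fin m)} (hπ : π ∈ fixingPerms S)
    (hτ : τ ∈ fixingPerms S) : π * τ ∈ fixingPerms S :=
  mem_fixingPerms.2 fun i hi => by
    rw [Equiv.Perm.mul_apply, mem_fixingPerms.1 hτ i hi, mem_fixingPerms.1 hπ i hi]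

theorem swap_mem_fixingPerms {p q : Fin m} (hp : p ∈ S) (hq : q ∈ S) :
    Equiv.swap p q ∈ fixingPerms S :=
  mem_fixingPerms.2 fun _ hi =>
    Equiv.swap_apply_of_ne_of_ne (by rintro rfl; exact hi hp) (by rintro rfl; exact hi hq)

theorem apply_mem_iff_of_mem_fixingPerms {π : Equiv.Perm (Fin m)} (hπ : π ∈ fixingPerms S)
    {i : Fin m} : π i ∈ S ↔ i ∈ S := by
  refine ⟨fun h => ?_, fun h => ?_⟩
  · by_contra hi
    rw [mem_fixingPerms.1 hπ i hi] at h
    exact hi h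
  · by_contra hi
    rw [π.injective (mem_fixingPerms.1 hπ _ hi)] at hi
    exact hi h

theorem sum_fixingPerms_apply_eq (s : Fin m → ℝ) {p q : Fin m} (hp : p ∈ S) (hq : q ∈ S) :
    ∑ π ∈ fixingPerms S, s (π p) = ∑ π ∈ fixingPerms S, s (π q) := by
  have hswap := swap_mem_fixingPerms hq hp
  refine sum_nbij' (· * Equiv.swap q p) (· * Equiv.swap q p) (fun π hπ => ?_) (fun π hπ => ?_)
    (fun π _ => Equiv.mul_swap_mul_self q p π) (fun π _ => Equiv.mul_swap_mul_self q p π)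
    (fun π _ => ?_)
  · exact mul_mem_fixingPerms (mem_coe.1 hπ) hswap
  · exact mul_mem_fixingPerms (mem_coe.1 hπ) hswap
  · simp

/-- For `p ∈ S`, `π ↦ π p` hits every point of `S` equally often as `π` ranges over
`fixingPerms S`. -/
theorem sum_fixingPerms_apply (s : Fin m → ℝ) (p : Fin m) :
    ∑ π ∈ fixingPerms S, s (π p) = #(fixingPerms S) * blockAverage S s p := by
  by_cases hp : p ∈ S
  · have hcard :
        (#S : ℝ) * ∑ π ∈ fixingPerms S, s (π p) = #(fixingPerms S) * ∑ j ∈ S, s j :=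
      calc (#S : ℝ) * ∑ π ∈ fixingPerms S, s (π p)
          = ∑ q ∈ S, ∑ π ∈ fixingPerms S, s (π q) := by
            rw [← nsmul_eq_mul, ← sum_const]
            exact sum_congr rfl fun q hq => sum_fixingPerms_apply_eq s hp hq
        _ = ∑ π ∈ fixingPerms S, ∑ j ∈ S, s j := by
            rw [sum_comm]
            exact sum_congr rfl fun π hπ => sum_equiv π
              (fun _ => (apply_mem_iff_of_mem_fixingPerms hπ).symm) fun _ _ => rfl
        _ = #(fixingPerms S) * ∑ j ∈ S, s j := by rw [sum_const, nsmul_eq_mul]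
    have hS : (#S : ℝ) ≠ 0 := Nat.cast_ne_zero.2 (card_ne_zero_of_mem hp)
    rw [blockAverage, if_pos hp, expect_eq_sum_div_card, mul_div_assoc', eq_div_iff hS, ← hcard]
    ring
  · rw [blockAverage, if_neg hp, sum_congr rfl fun π hπ => by rw [mem_fixingPerms.1 hπ p hp],
      sum_const, nsmul_eq_mul]

theorem sum_fixingPerms_scoreOn {A : Type*} (s : Fin m → ℝ) (b : Fin m → A) (a : A) :
    ∑ π ∈ fixingPerms S, scoreOn s (b ∘ π.symm) a
      = #(fixingPerms S) * scoreOn (blockAverage S s) b a := by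
  simp only [scoreOn_comp_perm_symm]
  simp only [scoreOn]
  rw [sum_comm, mul_sum]
  refine sum_congr rfl fun j _ => ?_
  split_ifs
  · exact sum_fixingPerms_apply s j
  · simp

variable (S) in
theorem scoreSum_shuffleBallots {A : Type*} (n : ℕ) (s : Fin m → ℝ) (Q : List (Fin m → A))
    (a : A) : scoreSum s (shuffleBallots S n Q) a
      = copiesPerVoter S n * scoreSum (blockAverage S s) Q a := by
  simp only [shuffleBallots, scoreSum_flatMap, scoreSum_replicate, permsOn_eq_toList]
  simp only [sum_map_toList, ← mul_sum, sum_fixingPerms_scoreOn]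
  simp only [scoreSum, copiesPerVoter, ← List.sum_map_mul_left, mul_assoc]

theorem copiesPerVoter_pos {n : ℕ} (hn : 0 < n) : 0 < copiesPerVoter S n := by
  have hS : #S ≤ m := by simpa using card_le_univ S
  have hdiv : 0 < n * m ! / (#S)! :=
    Nat.div_pos ((Nat.factorial_le hS).trans (Nat.le_mul_of_pos_left _ hn))
      (Nat.factorial_pos _)
  exact mul_pos (by exact_mod_cast hdiv)
    (by exact_mod_cast card_pos.2 ⟨1, one_mem_fixingPerms⟩)

theorem antitone_blockAverage {s : Fin m → ℝ} (hs : Antitone s)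
    (hS : IsUpperSet (S : Set (Fin m))) : Antitone (blockAverage S s) := by
  intro i j hij
  by_cases hj : j ∈ S <;> by_cases hi : i ∈ S <;>
    simp only [blockAverage, hi, hj, if_true, if_false]
  · exact le_rfl
  · refine expect_le ⟨j, hj⟩ fun x hx => hs ?_
    by_contra hxi
    exact hi (hS (le_of_not_ge hxi) hx)
  · exact absurd (hS hij hi) hj
  · exact hs hij

end Shuffle

section Completion

variable {A : Type*} [Fintype A] [LinearOrder A] {k m : ℕ} (hk : 0 < k)

theorem completeBallot_of_lt (b : Fin k → A) {j : Fin m} (hj : j.val < k) :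
    completeBallot hk b j = b ⟨j, hj⟩ :=
  dif_pos hj

theorem completeBallot_castLE (hkm : k ≤ m) (b : Fin k → A) (i : Fin k) :
    completeBallot hk b (Fin.castLE hkm i) = b i :=
  completeBallot_of_lt hk b i.isLt

variable {hk}

theorem length_sort_compl_range (hcard : Fintype.card A = m) {b : Fin k → A}
    (hb : Function.Injective b) :
    ((univ \ univ.image b).sort (· ≤ ·)).length = m - k := by
  rw [length_sort, card_sdiff_of_subset (subset_univ _), card_univ, hcard,
    card_image_of_injective _ hb, card_univ, Fintype.card_fin]

theorem completeBallot_of_le (hcard : Fintype.card A = m) {b : Fin k → A}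
    (hb : Function.Injective b) {j : Fin m} (hj : k ≤ j.val) :
    completeBallot hk b j = ((univ \ univ.image b).sort (· ≤ ·))[j.val - k]'(by
      rw [length_sort_compl_range hcard hb]; omega) := by
  rw [completeBallot, dif_neg (by omega), List.getD_eq_getElem]

theorem completeBallot_notMem_range (hcard : Fintype.card A = m) {b : Fin k → A}
    (hb : Function.Injective b) {j : Fin m} (hj : k ≤ j.val) :
    completeBallot hk b j ∉ Set.range b := by
  rw [completeBallot_of_le hcard hb hj]
  have hmem := List.getElem_mem (l := (univ \ univ.image b).sort (· ≤ ·)) (by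
      rw [length_sort_compl_range hcard hb]; omega : j.val - k < _)
  rw [mem_sort, mem_sdiff, mem_image] at hmem
  rintro ⟨i, hi⟩
  exact hmem.2 ⟨i, mem_univ _, hi⟩

theorem completeBallot_injective (hcard : Fintype.card A = m) {b : Fin k → A}
    (hb : Function.Injective b) : Function.Injective (completeBallot (m := m) hk b) := by
  intro i j hij
  rcases lt_or_ge i.val k with hi | hi <;> rcases lt_or_ge j.val k with hj | hj
  · rw [completeBallot_of_lt hk b hi, completeBallot_of_lt hk b hj] at hij
    exact Fin.ext (Fin.mk.inj_iff.1 (hb hij))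
  · exact absurd ⟨_, (completeBallot_of_lt hk b hi).symm.trans hij⟩
      (completeBallot_notMem_range hcard hb hj)
  · exact absurd ⟨_, (completeBallot_of_lt hk b hj).symm.trans hij.symm⟩
      (completeBallot_notMem_range hcard hb hi)
  · rw [completeBallot_of_le hcard hb hi, completeBallot_of_le hcard hb hj] at hij
    have := (sort_nodup _ _).getElem_inj_iff.1 hij
    omega

theorem completeBallot_bijective (hcard : Fintype.card A = m) {b : Fin k → A}
    (hb : Function.Injective b) : Function.Bijective (completeBallot (m := m) hk b) :=
  (Fintype.bijective_iff_injective_and_card _).2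
    ⟨completeBallot_injective hcard hb, by rw [Fintype.card_fin, hcard]⟩

/-- Alternatives missing from `b` land in positions `≥ k`, where `v` is the constant `c`. -/
theorem scoreOn_completeBallot (hcard : Fintype.card A = m) {b : Fin k → A}
    (hb : Function.Injective b) (hkm : k ≤ m) {v : Fin m → ℝ} {c : ℝ}
    (hv : ∀ j : Fin m, k ≤ j.val → v j = c) (a : A) :
    scoreOn v (completeBallot hk b) a = c + scoreOn (fun i => v (Fin.castLE hkm i) - c) b a := by
  have hinj := completeBallot_injective (hk := hk) hcard hb
  by_cases ha : a ∈ Set.range b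
  · obtain ⟨i, rfl⟩ := ha
    rw [← completeBallot_castLE hk hkm b i, scoreOn_apply_of_injective _ hinj,
      completeBallot_castLE, scoreOn_apply_of_injective _ hb]
    ring
  · obtain ⟨j, rfl⟩ := (completeBallot_bijective (hk := hk) hcard hb).2 a
    have hj : k ≤ j.val := by
      by_contra hj
      exact ha ⟨_, (completeBallot_of_lt hk b (not_le.1 hj)).symm⟩
    rw [scoreOn_apply_of_injective _ hinj, hv j hj, scoreOn_of_notMem_range _ ha, add_zero]

theorem scoreSum_map_completeBallot (hcard : Fintype.card A = m) (hkm : k ≤ m) {v : Fin m → ℝ}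
    {c : ℝ}     (hv : ∀ j : Fin m, k ≤ j.val → v j = c) (P : List (Fin k → A))
    (hP : ∀ b ∈ P, Function.Injective b) (a : A) :
    scoreSum v (P.map (completeBallot hk)) a
      = c * P.length + scoreSum (fun i => v (Fin.castLE hkm i) - c) P a := by
  induction P with
  | nil => simp [scoreSum]
  | cons b P ih =>
    simp only [scoreSum, List.map_cons, List.sum_cons, List.length_cons] at ih ⊢
    rw [scoreOn_completeBallot hcard (hP b (by simp)) hkm hv,
      ih fun b hb => hP b (by simp [hb])]
    push_cast
    ring

end Completion

namespace ScoreVec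

variable {ℓ : ℕ}

theorem apply_eq_zero_of_le (sv : ScoreVec ℓ) {i : Fin ℓ} (hi : ℓ - 1 ≤ i.val) : sv.s i = 0 := by
  rw [show i = ⟨ℓ - 1, Nat.sub_lt i.pos one_pos⟩ from
    Fin.ext ((Nat.le_sub_one_of_lt i.isLt).antisymm hi), sv.last i.pos]

theorem nonneg (sv : ScoreVec ℓ) (i : Fin ℓ) : 0 ≤ sv.s i := by
  have h := sv.anti (show i ≤ ⟨ℓ - 1, Nat.sub_lt i.pos one_pos⟩ from
    Fin.le_def.2 (Nat.le_sub_one_of_lt i.isLt))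
  rwa [sv.last i.pos] at h

theorem le_one (sv : ScoreVec ℓ) (i : Fin ℓ) : sv.s i ≤ 1 := by
  have h := sv.anti (show (⟨0, i.pos⟩ : Fin ℓ) ≤ i from Fin.le_def.2 (Nat.zero_le _))
  rwa [sv.first i.pos] at h

theorem expect_lt_one (sv : ScoreVec ℓ) {S : Finset (Fin ℓ)} (hS : ∃ j ∈ S, sv.s j < 1) :
    𝔼 j ∈ S, sv.s j < 1 := by
  obtain ⟨j, hj, hj1⟩ := hS
  calc 𝔼 j ∈ S, sv.s j < 𝔼 _j ∈ S, (1 : ℝ) :=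
        expect_lt_expect (fun i _ => sv.le_one i) ⟨j, hj, hj1⟩
    _ = 1 := expect_const ⟨j, hj⟩ 1

def ofAntitone (hℓ : 0 < ℓ) (w : Fin ℓ → ℝ) (hw : Antitone w) (h0 : 0 < w ⟨0, hℓ⟩)
    (hlast : w ⟨ℓ - 1, by omega⟩ = 0) : ScoreVec ℓ where
  s := (w ⟨0, hℓ⟩)⁻¹ • w
  anti _ _ hij := smul_le_smul_of_nonneg_left (hw hij) (inv_nonneg.2 h0.le)
  first _ := inv_mul_cancel₀ h0.ne'
  last _ := by simp [hlast]

theorem perfectConsistency_ofAntitone_iff {A : Type*} [Fintype A] {hℓ : 0 < ℓ} {w : Fin ℓ → ℝ}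
    {hw : Antitone w} {h0 : 0 < w ⟨0, hℓ⟩} {hlast : w ⟨ℓ - 1, by omega⟩ = 0}
    {P1 P2 : List (Fin ℓ → A)} :
    PerfectConsistency (ofAntitone hℓ w hw h0 hlast) P1 P2 ↔ ConsistentWeights w P1 P2 :=
  consistentWeights_smul_iff (inv_ne_zero h0.ne')

end ScoreVec

section EffectiveVector

variable {k m : ℕ}

def shuffledBlock (m k : ℕ) : Finset (Fin m) :=
  univ.filter fun i : Fin m => k - 1 ≤ i.val

theorem mem_shuffledBlock {i : Fin m} : i ∈ shuffledBlock m k ↔ k - 1 ≤ i.val := by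
  simp [shuffledBlock]

theorem isUpperSet_shuffledBlock : IsUpperSet (shuffledBlock m k : Set (Fin m)) :=
  fun _ _ hij hi => mem_shuffledBlock.2 ((mem_shuffledBlock.1 hi).trans hij)

def effectiveVec (hkm : k ≤ m) (s : Fin m → ℝ) : Fin k → ℝ :=
  fun i => blockAverage (shuffledBlock m k) s (Fin.castLE hkm i) - 𝔼 j ∈ shuffledBlock m k, s j

theorem scoreSum_shuffle_completeBallot_sub {A : Type*} [Fintype A] [LinearOrder A] (hk : 0 < k)
    (hkm : k ≤ m) (hcard : Fintype.card A = m) (s : Fin m → ℝ) (P : List (Fin k → A))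
    (hP : ∀ b ∈ P, Function.Injective b) (a b : A) :
    scoreSum s (shuffleBallots (shuffledBlock m k) 1 (P.map (completeBallot hk))) a
        - scoreSum s (shuffleBallots (shuffledBlock m k) 1 (P.map (completeBallot hk))) b
      = copiesPerVoter (shuffledBlock m k) 1
          * (scoreSum (effectiveVec hkm s) P a - scoreSum (effectiveVec hkm s) P b) := by
  have hv : ∀ j : Fin m, k ≤ j.val →
      blockAverage (shuffledBlock m k) s j = 𝔼 i ∈ shuffledBlock m k, s i :=
    fun j hj => if_pos (mem_shuffledBlock.2 (by omega))
  simp only [scoreSum_shuffleBallots, scoreSum_map_completeBallot hcard hkm hv P hP]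
  unfold effectiveVec
  ring

theorem consistentWeights_shuffle_completeBallot_iff {A : Type*} [Fintype A] [LinearOrder A]
    (hk : 0 < k) (hkm : k ≤ m) (hcard : Fintype.card A = m) (s : Fin m → ℝ)
    {P1 P2 : List (Fin k → A)} (hP1 : ∀ b ∈ P1, Function.Injective b)
    (hP2 : ∀ b ∈ P2, Function.Injective b) :
    ConsistentWeights s (shuffleBallots (shuffledBlock m k) 1 (P1.map (completeBallot hk)))
        (shuffleBallots (shuffledBlock m k) 1 (P2.map (completeBallot hk)))
      ↔ ConsistentWeights (effectiveVec hkm s) P1 P2 :=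
  consistentWeights_iff_of_sub_eq (copiesPerVoter_pos one_pos).ne'
    (scoreSum_shuffle_completeBallot_sub hk hkm hcard s P1 hP1)
    (scoreSum_shuffle_completeBallot_sub hk hkm hcard s P2 hP2)

theorem antitone_effectiveVec (hkm : k ≤ m) {s : Fin m → ℝ} (hs : Antitone s) :
    Antitone (effectiveVec hkm s) := fun _ _ hij =>
  sub_le_sub_right
    (antitone_blockAverage hs isUpperSet_shuffledBlock ((Fin.castLE_le_castLE_iff hkm).2 hij)) _

theorem effectiveVec_last (hkm : k ≤ m) (s : Fin m → ℝ) (hk : 0 < k) :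
    effectiveVec hkm s ⟨k - 1, by omega⟩ = 0 := by
  simp [effectiveVec, blockAverage, mem_shuffledBlock]

theorem effectiveVec_zero (hkm : k ≤ m) (s : Fin m → ℝ) (hk2 : 2 ≤ k) :
    effectiveVec hkm s ⟨0, by omega⟩ = s ⟨0, by omega⟩ - 𝔼 j ∈ shuffledBlock m k, s j := by
  have h0 : Fin.castLE hkm ⟨0, by omega⟩ ∉ shuffledBlock m k := by
    rw [mem_shuffledBlock]
    show ¬k - 1 ≤ 0
    omega
  rw [effectiveVec, blockAverage, if_neg h0]
  rfl

namespace ScoreVec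

def extendZero (hk : 0 < k) (hkm : k ≤ m) (sv : ScoreVec k) : ScoreVec m where
  s i := if h : i.val < k then sv.s ⟨i, h⟩ else 0
  anti i j hij := by
    by_cases hj : j.val < k
    · simp only [dif_pos hj, dif_pos (lt_of_le_of_lt (Fin.le_def.1 hij) hj)]
      exact sv.anti (Fin.le_def.2 hij)
    · simp only [dif_neg hj]
      split_ifs
      exacts [sv.nonneg _, le_rfl]
  first _ := by simp [hk, sv.first hk]
  last _ := by
    split_ifs with h
    exacts [sv.apply_eq_zero_of_le (show k - 1 ≤ m - 1 by omega), rfl]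

theorem extendZero_of_mem_shuffledBlock (hk : 0 < k) (hkm : k ≤ m) (sv : ScoreVec k)
    {j : Fin m} (hj : j ∈ shuffledBlock m k) : (sv.extendZero hk hkm).s j = 0 := by
  show (if h : j.val < k then sv.s ⟨j, h⟩ else 0) = 0
  split_ifs with h
  exacts [sv.apply_eq_zero_of_le (show k - 1 ≤ j.val from mem_shuffledBlock.1 hj), rfl]

theorem effectiveVec_extendZero (hk : 0 < k) (hkm : k ≤ m) (sv : ScoreVec k) :
    effectiveVec hkm (sv.extendZero hk hkm).s = sv.s := by
  have hzero := fun j (hj : j ∈ shuffledBlock m k) =>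
    extendZero_of_mem_shuffledBlock hk hkm sv hj
  funext i
  have hi : (sv.extendZero hk hkm).s (Fin.castLE hkm i) = sv.s i := dif_pos i.isLt
  simp only [effectiveVec, blockAverage, expect_eq_zero hzero, sub_zero]
  split_ifs with h
  · rw [← hi, hzero _ h]
  · exact hi

def effective (hk2 : 2 ≤ k) (hkm : k ≤ m) (sv : ScoreVec m) : ScoreVec k :=
  ofAntitone (by omega) (effectiveVec hkm sv.s) (antitone_effectiveVec hkm sv.anti)
    (by
      rw [effectiveVec_zero hkm sv.s hk2, sv.first (by omega), sub_pos]
      exact sv.expect_lt_one ⟨⟨m - 1, by omega⟩, mem_shuffledBlock.2 (show k - 1 ≤ m - 1 by omega),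
        by rw [sv.last (by omega)]; exact one_pos⟩)
    (effectiveVec_last hkm sv.s (by omega))

end ScoreVec

end EffectiveVector

/-- Let `P` be a `k`-partial profile, given by its two sides `P1, P2` of a
split with `|N₁| = |N₂|` (ballots are injective position-to-alternative maps on `Fin k`).
Let `P'` be the completion of `P` and `P'' = Shuffle_{[k,m]}^1(P')`, each copy inheriting
the side of the original voter. Then some length-`k` scoring vector achieves perfect
consistency on the split of `P` iff some length-`m` scoring vector achieves perfect
consistency on the inherited split of `P''`. -/
theorem partial_perfect_consistency_iff_shuffled {A : Type*} [Fintype A] [LinearOrder A]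
    {m k : ℕ} (hcard : Fintype.card A = m) (hk2 : 2 ≤ k) (hkm : k ≤ m)
    (P1 P2 : List (Fin k → A))
    (hinj1 : ∀ b ∈ P1, Function.Injective b)
    (hinj2 : ∀ b ∈ P2, Function.Injective b) :
    (∃ sv : ScoreVec k, PerfectConsistency sv P1 P2) ↔
    (∃ sv : ScoreVec m,
      PerfectConsistency sv
        (shuffleBallots (Finset.univ.filter fun i : Fin m => k - 1 ≤ i.val) 1
          (P1.map (completeBallot (A := A) (m := m) (by omega))))
        (shuffleBallots (Finset.univ.filter fun i : Fin m => k - 1 ≤ i.val) 1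
          (P2.map (completeBallot (A := A) (m := m) (by omega))))) := by
  have hk : 0 < k := by omega
  have hshuffle := fun s =>
    consistentWeights_shuffle_completeBallot_iff hk hkm hcard s hinj1 hinj2
  constructor
  · rintro ⟨sv, hsv⟩
    refine ⟨sv.extendZero hk hkm, (hshuffle _).2 ?_⟩
    rwa [ScoreVec.effectiveVec_extendZero]
  · rintro ⟨sv, hsv⟩
    exact ⟨sv.effective hk2 hkm,
      ScoreVec.perfectConsistency_ofAntitone_iff.2 ((hshuffle sv.s).1 hsv)⟩
end
end
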